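/- arXiv:2212.14174 — 9 statements merged into one kernel-verified Lean document; each statement's English description precedes it below -/
import Mathlib

section
/- Let g : ℝ → ℝ be continuous and let x₁ < x̄ < m be real numbers. Assume that g and ξ ↦ ξ·g(ξ) are Lebesgue integrable on (x₁, ∞), and define H(x) := −∫_x^∞ g(ξ) dξ for x ≥ x₁. Assume: (i) g(ξ) > 0 for every ξ > m; (ii) H(x) > 0 for all x ∈ (x₁, x̄) and H(x) < 0 for all x ∈ (x̄, m]; (iii) H(m) < H(x) for all x ∈ (x₁, m); (iv) ∫_{x₁}^∞ (x₁ − ξ) g(ξ) dξ = 0. Then for every x ∈ (x₁, m) there exists a unique y ∈ (m, ∞) such that ∫_x^y (x − ξ) g(ξ) dξ = 0. -/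
open MeasureTheory Set

/-- Integration by parts for `∫ (a-ξ) g ξ` with `K' = g`. -/
lemma aux_ibp (g K : ℝ → ℝ) (hg : Continuous g) (hK : ∀ y, HasDerivAt K (g y) y)
    (a b : ℝ) :
    ∫ ξ in a..b, (a - ξ) * g ξ = (a - b) * K b + ∫ s in a..b, K s := by
  have hKc : Continuous K := by
    rw [continuous_iff_continuousAt]; exact fun y => (hK y).continuousAt
  have hgc : Continuous fun ξ => (a - ξ) * g ξ :=
    (continuous_const.sub continuous_id).mul hg
  set ψ : ℝ → ℝ := fun y =>
    (∫ ξ in a..y, (a - ξ) * g ξ) - ((a - y) * K y + ∫ s in a..y, K s) with hψ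
  have hder : ∀ y, HasDerivAt ψ 0 y := by
    intro y
    have h1 : HasDerivAt (fun u => ∫ ξ in a..u, (a - ξ) * g ξ) ((a - y) * g y) y :=
      intervalIntegral.integral_hasDerivAt_right (hgc.intervalIntegrable a y)
        hgc.stronglyMeasurable.stronglyMeasurableAtFilter hgc.continuousAt
    have h2 : HasDerivAt (fun u => (a - u) * K u) (-1 * K y + (a - y) * g y) y :=
      ((hasDerivAt_id y).const_sub a).mul (hK y)
    have h3 : HasDerivAt (fun u => ∫ s in a..u, K s) (K y) y :=
      intervalIntegral.integral_hasDerivAt_right (hKc.intervalIntegrable a y)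
        hKc.stronglyMeasurable.stronglyMeasurableAtFilter hKc.continuousAt
    have := h1.sub (h2.add h3)
    exact this.congr_deriv (by ring)
  have hconst : ψ b = ψ a := by
    have hdiff : Differentiable ℝ ψ := fun y => (hder y).differentiableAt
    have hzero : ∀ y, deriv ψ y = 0 := fun y => (hder y).deriv
    exact is_const_of_deriv_eq_zero hdiff hzero b a
  have ha : ψ a = 0 := by simp [hψ]
  have hb : ψ b = 0 := hconst.trans ha
  simp only [hψ] at hb
  linarith [hb]

/-- Existence and uniqueness of the upper transport map `T_u`:
for every `x ∈ (x₁, m)` there is a unique `y ∈ (m, ∞)` with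
`∫_x^y (x − ξ) g(ξ) dξ = 0`. -/
theorem stmt0 (g : ℝ → ℝ) (hg : Continuous g) (x₁ xbar m : ℝ)
    (hx₁xbar : x₁ < xbar) (hxbarm : xbar < m)
    (hint : IntegrableOn g (Ioi x₁))
    (hint' : IntegrableOn (fun ξ => ξ * g ξ) (Ioi x₁))
    (H : ℝ → ℝ) (hH : ∀ x, x₁ ≤ x → H x = -∫ ξ in Ioi x, g ξ)
    (hgpos : ∀ ξ, m < ξ → 0 < g ξ)
    (hHpos : ∀ x ∈ Ioo x₁ xbar, 0 < H x)
    (hHneg : ∀ x ∈ Ioc xbar m, H x < 0)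
    (hHmin : ∀ x ∈ Ioo x₁ m, H m < H x)
    (hx₁ : ∫ ξ in Ioi x₁, (x₁ - ξ) * g ξ = 0) :
    ∀ x ∈ Ioo x₁ m, ∃! y, y ∈ Ioi m ∧ ∫ ξ in x..y, (x - ξ) * g ξ = 0 := by
  have hx₁m : x₁ < m := hx₁xbar.trans hxbarm
  -- the antiderivative of g
  set K : ℝ → ℝ := fun y => ∫ ξ in x₁..y, g ξ with hKdef
  have hKder : ∀ y, HasDerivAt K (g y) y := fun y =>
    intervalIntegral.integral_hasDerivAt_right (hg.intervalIntegrable x₁ y)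
      hg.stronglyMeasurable.stronglyMeasurableAtFilter hg.continuousAt
  set Hc : ℝ → ℝ := fun y => H x₁ + K y with hHcdef
  have hHcder : ∀ y, HasDerivAt Hc (g y) y := fun y => (hKder y).const_add (H x₁)
  have hHcc : Continuous Hc := by
    rw [continuous_iff_continuousAt]; exact fun y => (hHcder y).continuousAt
  -- splitting of integrals over Ioi x₁
  have hsplit : ∀ (f : ℝ → ℝ), IntegrableOn f (Ioi x₁) → ∀ y, x₁ ≤ y →
      (∫ ξ in Ioc x₁ y, f ξ) + (∫ ξ in Ioi y, f ξ) = ∫ ξ in Ioi x₁, f ξ := by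
    intro f hf y hy
    rw [← setIntegral_union Ioc_disjoint_Ioi_same measurableSet_Ioi
        (hf.mono_set Ioc_subset_Ioi_self) (hf.mono_set (Ioi_subset_Ioi hy)),
      Ioc_union_Ioi_eq_Ioi hy]
  -- Hc agrees with H on [x₁, ∞)
  have hHcH : ∀ y, x₁ ≤ y → Hc y = H y := by
    intro y hy
    have h1 := hsplit g hint y hy
    have h2 : K y = ∫ ξ in Ioc x₁ y, g ξ := intervalIntegral.integral_of_le hy
    rw [hHcdef]
    simp only
    rw [hH y hy, hH x₁ le_rfl, h2]
    linarith [h1]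
  -- integrability of (c - ξ) g ξ
  have hIc : ∀ c : ℝ, IntegrableOn (fun ξ => (c - ξ) * g ξ) (Ioi x₁) := by
    intro c
    have := (hint.const_mul c).sub hint'
    simpa [sub_mul, Pi.sub_def, IntegrableOn] using this
  set I : ℝ → ℝ := fun y => ∫ s in x₁..y, Hc s with hIdef
  -- key identity : ∫_{Ioi c} (c - ξ) g = - I c
  have hBI : ∀ c, x₁ ≤ c → (∫ ξ in Ioi c, (c - ξ) * g ξ) = - I c := by
    intro c hc
    have e1 := hsplit (fun ξ => (c - ξ) * g ξ) (hIc c) c hc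
    have e2 : ∫ ξ in Ioi x₁, (c - ξ) * g ξ = (c - x₁) * (- H x₁) := by
      have h0 : (fun ξ => (c - ξ) * g ξ)
          = fun ξ => (x₁ - ξ) * g ξ + (c - x₁) * g ξ := by funext ξ; ring
      have hg0 : ∫ ξ in Ioi x₁, g ξ = - H x₁ := by rw [hH x₁ le_rfl]; ring
      rw [h0, integral_add (hIc x₁) (hint.const_mul _), hx₁, integral_const_mul, hg0]
      ring
    have e3 : ∫ ξ in Ioc x₁ c, (c - ξ) * g ξ
        = ((x₁ - c) * Hc c + I c) + (c - x₁) * K c := by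
      rw [← intervalIntegral.integral_of_le hc]
      have h0 : ∀ ξ, (c - ξ) * g ξ = (x₁ - ξ) * g ξ + (c - x₁) * g ξ := fun ξ => by ring
      have hcont1 : Continuous fun ξ => (x₁ - ξ) * g ξ :=
        (continuous_const.sub continuous_id).mul hg
      calc ∫ ξ in x₁..c, (c - ξ) * g ξ
          = ∫ ξ in x₁..c, ((x₁ - ξ) * g ξ + (c - x₁) * g ξ) := by simp only [h0]
        _ = (∫ ξ in x₁..c, (x₁ - ξ) * g ξ) + ∫ ξ in x₁..c, (c - x₁) * g ξ :=
            intervalIntegral.integral_add (hcont1.intervalIntegrable _ _)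
              ((continuous_const.mul hg).intervalIntegrable _ _)
        _ = ((x₁ - c) * Hc c + I c) + (c - x₁) * K c := by
            rw [aux_ibp g Hc hg hHcder, intervalIntegral.integral_const_mul]
    have e4 : Hc c = H x₁ + K c := rfl
    have e5 : ∫ ξ in Ioi c, (c - ξ) * g ξ
        = (c - x₁) * (- H x₁) - (((x₁ - c) * Hc c + I c) + (c - x₁) * K c) := by
      linarith [e1, e2, e3]
    rw [e5, e4]; ring
  ------------------------------------------------------------------
  intro x hx
  obtain ⟨hx₁x, hxm⟩ := hx
  -- positivity of I m
  have hIm : 0 < I m := by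
    have hfc : Continuous fun ξ => (ξ - m) * g ξ :=
      (continuous_id.sub continuous_const).mul hg
    have hfint : IntegrableOn (fun ξ => (ξ - m) * g ξ) (Ioi m) := by
      have h := (hint'.mono_set (Ioi_subset_Ioi hx₁m.le)).sub
        ((hint.mono_set (Ioi_subset_Ioi hx₁m.le)).const_mul m)
      simpa [sub_mul, Pi.sub_def] using h
    have hlow : 0 < ∫ ξ in Ioc (m+1) (m+2), (ξ - m) * g ξ := by
      rw [← intervalIntegral.integral_of_le (by linarith)]
      apply intervalIntegral.intervalIntegral_pos_of_pos_on
        (hfc.intervalIntegrable _ _)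
      · intro ξ hξ
        have h1 : m < ξ := by linarith [hξ.1]
        exact mul_pos (by linarith) (hgpos ξ h1)
      · linarith
    have hmono : (∫ ξ in Ioc (m+1) (m+2), (ξ - m) * g ξ)
        ≤ ∫ ξ in Ioi m, (ξ - m) * g ξ := by
      apply setIntegral_mono_set hfint
      · filter_upwards [ae_restrict_mem measurableSet_Ioi] with ξ hξ
        exact mul_nonneg (by linarith [mem_Ioi.mp hξ]) (hgpos ξ hξ).le
      · exact HasSubset.Subset.eventuallyLE
          (Ioc_subset_Ioi_self.trans (Ioi_subset_Ioi (by linarith)))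
    have hneg : ∫ ξ in Ioi m, (ξ - m) * g ξ = - ∫ ξ in Ioi m, (m - ξ) * g ξ := by
      rw [← integral_neg]; congr 1; funext ξ; ring
    have := hBI m hx₁m.le
    linarith [hlow, hmono]
  -- positivity of I x
  have hIx : 0 < I x := by
    rcases le_or_gt x xbar with hcase | hcase
    · apply intervalIntegral.intervalIntegral_pos_of_pos_on
        (hHcc.intervalIntegrable _ _)
      · intro s hs
        have := hHpos s ⟨hs.1, lt_of_lt_of_le hs.2 hcase⟩
        rwa [← hHcH s (by linarith [hs.1])] at this
      · exact hx₁x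
    · have hadj : I x + ∫ s in x..m, Hc s = I m :=
        intervalIntegral.integral_add_adjacent_intervals
          (hHcc.intervalIntegrable _ _) (hHcc.intervalIntegrable _ _)
      have hnp : ∫ s in x..m, Hc s ≤ 0 := by
        have h0 : 0 ≤ ∫ s in x..m, -Hc s := by
          apply intervalIntegral.integral_nonneg hxm.le
          intro u hu
          have hu1 : xbar < u := lt_of_lt_of_le hcase hu.1
          have := hHneg u ⟨hu1, hu.2⟩
          rw [← hHcH u (by linarith)] at this
          linarith
        rw [intervalIntegral.integral_neg] at h0
        linarith
      linarith
  -- Φ and its derivative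
  set Φ : ℝ → ℝ := fun y => ∫ ξ in x..y, (x - ξ) * g ξ with hΦdef
  have hgcx : Continuous fun ξ => (x - ξ) * g ξ :=
    (continuous_const.sub continuous_id).mul hg
  have hΦder : ∀ y, HasDerivAt Φ ((x - y) * g y) y := fun y =>
    intervalIntegral.integral_hasDerivAt_right (hgcx.intervalIntegrable x y)
      hgcx.stronglyMeasurable.stronglyMeasurableAtFilter hgcx.continuousAt
  have hΦcont : Continuous Φ := by
    rw [continuous_iff_continuousAt]; exact fun y => (hΦder y).continuousAt
  -- Φ m > 0
  have hΦm : 0 < Φ m := by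
    have hibp := aux_ibp g Hc hg hHcder x m
    have hsub : ∫ s in x..m, (Hc s - Hc m)
        = (∫ s in x..m, Hc s) - (m - x) * Hc m := by
      rw [intervalIntegral.integral_sub (hHcc.intervalIntegrable _ _)
        intervalIntegrable_const, intervalIntegral.integral_const]
      simp [smul_eq_mul]
    have hpos : 0 < ∫ s in x..m, (Hc s - Hc m) := by
      apply intervalIntegral.intervalIntegral_pos_of_pos_on
        ((hHcc.sub continuous_const).intervalIntegrable _ _)
      · intro s hs
        have := hHmin s ⟨hx₁x.trans hs.1, hs.2⟩
        rw [← hHcH s (by linarith [hs.1]), ← hHcH m hx₁m.le] at this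
        show 0 < Hc s - Hc m
        linarith
      · exact hxm
    have : Φ m = (x - m) * Hc m + ∫ s in x..m, Hc s := hibp
    linarith
  -- eventually Φ < 0
  have hBx : (∫ ξ in Ioi x, (x - ξ) * g ξ) = - I x := hBI x hx₁x.le
  have htend : Filter.Tendsto Φ Filter.atTop (nhds (∫ ξ in Ioi x, (x - ξ) * g ξ)) :=
    intervalIntegral_tendsto_integral_Ioi x
      ((hIc x).mono_set (Ioi_subset_Ioi hx₁x.le)) Filter.tendsto_id
  have hev : ∀ᶠ y in Filter.atTop, Φ y < 0 := by
    have : (∫ ξ in Ioi x, (x - ξ) * g ξ) < 0 := by rw [hBx]; linarith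
    exact htend.eventually_lt_const this |>.mono (fun y hy => hy)
  obtain ⟨Y, hYm, hYneg⟩ : ∃ Y, m < Y ∧ Φ Y < 0 := by
    obtain ⟨Y, hY1, hY2⟩ := (Filter.eventually_gt_atTop m |>.and hev).exists
    exact ⟨Y, hY1, hY2⟩
  -- existence via IVT
  obtain ⟨y, hyIcc, hΦy⟩ := intermediate_value_Icc' hYm.le hΦcont.continuousOn
    (⟨hYneg.le, hΦm.le⟩ : (0:ℝ) ∈ Icc (Φ Y) (Φ m))
  have hym : m < y := by
    rcases lt_or_eq_of_le hyIcc.1 with h | h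
    · exact h
    · exfalso; rw [h, hΦy] at hΦm; exact lt_irrefl _ hΦm
  -- strict antitonicity on [m, ∞)
  have hanti : StrictAntiOn Φ (Ici m) := by
    apply strictAntiOn_of_deriv_neg (convex_Ici m) hΦcont.continuousOn
    intro z hz
    rw [interior_Ici] at hz
    rw [(hΦder z).deriv]
    have hz' : m < z := hz
    exact mul_neg_of_neg_of_pos (by linarith) (hgpos z hz')
  refine ⟨y, ⟨hym, hΦy⟩, ?_⟩
  rintro z ⟨hzm, hΦz⟩
  exact hanti.injOn (mem_Ici.mpr (le_of_lt hzm)) (mem_Ici.mpr (le_of_lt hym)) (hΦz.trans hΦy.symm)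
end

section
/- Let t ∈ ℝ, ε > 0, and T ≤ x be real numbers. Let F : ℝ² → ℝ be twice continuously differentiable on an open set containing the rectangle R := [t, t+ε] × [T, x]. Assume there is δ > 0 with ∂_x F ≥ δ on R, and that F(t+ε, T) = F(t, x). Set A := sup_R |∂_{tt} F|, B := sup_R |∂_{xx} F| and D := sup_R |∂_t F|. Then | (x − T) − ε · ∂_t F(t,x)/∂_x F(t+ε, x) | ≤ ε² · ( A/(2δ) + B·D²/(2δ³) ). -/
open MeasureTheory Set

/-- First-order Taylor bound with Lagrange-type constant `C (b-a)²/2`. -/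
lemma key_taylor {f f' f'' : ℝ → ℝ} {a b C : ℝ} (hab : a ≤ b)
    (hf : ∀ y ∈ Icc a b, HasDerivAt f (f' y) y)
    (hf' : ∀ y ∈ Icc a b, HasDerivAt f' (f'' y) y)
    (hC : ∀ y ∈ Icc a b, |f'' y| ≤ C) :
    |f b - f a - f' a * (b - a)| ≤ C * (b - a) ^ 2 / 2 := by
  have ha : a ∈ Icc a b := ⟨le_refl a, hab⟩
  have hmvt : ∀ y ∈ Icc a b, |f' y - f' a| ≤ C * (y - a) := by
    intro y hy
    have := Convex.norm_image_sub_le_of_norm_hasDerivWithin_le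
      (f := f') (f' := f'') (C := C) (s := Icc a b)
      (fun z hz => (hf' z hz).hasDerivWithinAt)
      (fun z hz => by simpa [Real.norm_eq_abs] using hC z hz)
      (convex_Icc a b) ha hy
    simpa [Real.norm_eq_abs, abs_of_nonneg (sub_nonneg.2 hy.1)] using this
  have main := image_norm_le_of_norm_deriv_right_le_deriv_boundary
    (f := fun y => f y - f a - f' a * (y - a)) (f' := fun y => f' y - f' a)
    (a := a) (b := b) (B := fun y => C * (y - a) ^ 2 / 2) (B' := fun y => C * (y - a))
    (by
      apply ContinuousOn.sub
      · exact ContinuousOn.sub (fun y hy => (hf y hy).continuousAt.continuousWithinAt)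
          continuousOn_const
      · exact continuousOn_const.mul (continuousOn_id.sub continuousOn_const))
    (by
      intro y hy
      have h1 : HasDerivAt (fun y => f y - f a - f' a * (y - a)) (f' y - f' a) y := by
        have := ((hf y (Ico_subset_Icc_self hy)).sub_const (f a)).sub
          (((hasDerivAt_id y).sub_const a).const_mul (f' a))
        simp only [mul_one] at this
        exact this
      exact h1.hasDerivWithinAt)
    (by simp)
    (by
      intro y
      have h2 : HasDerivAt (fun y => C * (y - a) ^ 2 / 2) (C * (2 * (y - a) ^ 1 * 1) / 2) y :=
        ((((hasDerivAt_id y).sub_const a).pow 2).const_mul C).div_const 2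
      convert h2 using 1
      ring)
    (by
      intro y hy
      simpa [Real.norm_eq_abs] using hmvt y (Ico_subset_Icc_self hy))
  simpa [Real.norm_eq_abs] using main ⟨hab, le_refl b⟩

/-- Reversed version: expansion at the right endpoint. -/
lemma key_taylor' {f f' f'' : ℝ → ℝ} {a b C : ℝ} (hab : a ≤ b)
    (hf : ∀ y ∈ Icc a b, HasDerivAt f (f' y) y)
    (hf' : ∀ y ∈ Icc a b, HasDerivAt f' (f'' y) y)
    (hC : ∀ y ∈ Icc a b, |f'' y| ≤ C) :
    |f a - f b - f' b * (a - b)| ≤ C * (b - a) ^ 2 / 2 := by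
  have hmem : ∀ y ∈ Icc a b, a + b - y ∈ Icc a b := by
    intro y hy; exact ⟨by linarith [hy.2], by linarith [hy.1]⟩
  have hinner : ∀ y : ℝ, HasDerivAt (fun y => a + b - y) (-1 : ℝ) y := by
    intro y; simpa using (hasDerivAt_id y).const_sub (a + b)
  have hg : ∀ y ∈ Icc a b, HasDerivAt (fun y => f (a + b - y)) (f' (a + b - y) * (-1)) y := by
    intro y hy
    exact HasDerivAt.comp y (hf _ (hmem y hy)) (hinner y)
  have hg' : ∀ y ∈ Icc a b, HasDerivAt (fun y => f' (a + b - y) * (-1))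
      (f'' (a + b - y) * (-1) * (-1)) y := by
    intro y hy
    exact (HasDerivAt.comp y (hf' _ (hmem y hy)) (hinner y)).mul_const (-1)
  have hkey := key_taylor (f := fun y => f (a + b - y)) (f' := fun y => f' (a + b - y) * (-1))
    (f'' := fun y => f'' (a + b - y) * (-1) * (-1)) (C := C) hab hg hg'
    (fun y hy => by simpa using hC _ (hmem y hy))
  simp only [add_sub_cancel_left, add_sub_cancel_right] at hkey
  calc |f a - f b - f' b * (a - b)|
      = |f a - f b - f' b * (-1) * (b - a)| := by ring_nf
    _ ≤ C * (b - a) ^ 2 / 2 := hkey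

/-- Asymptotic expansion of the downward (quantile) map in the supermartingale
region: if `F(t+ε, T) = F(t, x)` then
`|(x − T) − ε·∂_tF(t,x)/∂_xF(t+ε,x)| ≤ ε²·(A/(2δ) + B·D²/(2δ³))`. -/
theorem stmt2 (t ε T x : ℝ) (hε : 0 < ε) (hTx : T ≤ x)
    (F : ℝ × ℝ → ℝ) (U : Set (ℝ × ℝ)) (hU : IsOpen U)
    (hRU : (Icc t (t + ε) ×ˢ Icc T x) ⊆ U)
    (hF : ContDiffOn ℝ 2 F U)
    (Ft Fx : ℝ → ℝ → ℝ)
    (hFt : ∀ s z, Ft s z = deriv (fun s' => F (s', z)) s)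
    (hFx : ∀ s z, Fx s z = deriv (fun z' => F (s, z')) z)
    (δ : ℝ) (hδ : 0 < δ)
    (hδle : ∀ p ∈ Icc t (t + ε) ×ˢ Icc T x, δ ≤ Fx p.1 p.2)
    (heq : F (t + ε, T) = F (t, x))
    (A B D : ℝ)
    (hA : ∀ p ∈ Icc t (t + ε) ×ˢ Icc T x, |deriv (fun s' => Ft s' p.2) p.1| ≤ A)
    (hB : ∀ p ∈ Icc t (t + ε) ×ˢ Icc T x, |deriv (fun z' => Fx p.1 z') p.2| ≤ B)
    (hD : ∀ p ∈ Icc t (t + ε) ×ˢ Icc T x, |Ft p.1 p.2| ≤ D) :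
    |(x - T) - ε * Ft t x / Fx (t + ε) x| ≤
      ε ^ 2 * (A / (2 * δ) + B * D ^ 2 / (2 * δ ^ 3)) := by
  have htε : t ≤ t + ε := by linarith
  -- differentiability of F on U
  have hdiff : ∀ p ∈ U, DifferentiableAt ℝ F p := fun p hp =>
    (hF.contDiffAt (hU.mem_nhds hp)).differentiableAt (by norm_num)
  -- partial derivative in the first coordinate
  have hFtline : ∀ s z : ℝ, (s, z) ∈ U →
      HasDerivAt (fun s' => F (s', z)) ((fderiv ℝ F (s, z)) (1, 0)) s := by
    intro s z h
    have h1 : HasDerivAt (fun s' : ℝ => ((s' : ℝ), z)) ((1 : ℝ), (0 : ℝ)) s :=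
      HasDerivAt.prodMk (hasDerivAt_id s) (hasDerivAt_const s z)
    exact (hdiff _ h).hasFDerivAt.comp_hasDerivAt s h1
  have hFt_eq : ∀ s z : ℝ, (s, z) ∈ U → Ft s z = (fderiv ℝ F (s, z)) (1, 0) := by
    intro s z h; rw [hFt]; exact (hFtline s z h).deriv
  have hFtHas : ∀ s z : ℝ, (s, z) ∈ U → HasDerivAt (fun s' => F (s', z)) (Ft s z) s := by
    intro s z h; rw [hFt_eq s z h]; exact hFtline s z h
  -- partial derivative in the second coordinate
  have hFxline : ∀ s z : ℝ, (s, z) ∈ U →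
      HasDerivAt (fun z' => F (s, z')) ((fderiv ℝ F (s, z)) (0, 1)) z := by
    intro s z h
    have h1 : HasDerivAt (fun z' : ℝ => ((s : ℝ), z')) ((0 : ℝ), (1 : ℝ)) z :=
      HasDerivAt.prodMk (hasDerivAt_const z s) (hasDerivAt_id z)
    exact (hdiff _ h).hasFDerivAt.comp_hasDerivAt z h1
  have hFx_eq : ∀ s z : ℝ, (s, z) ∈ U → Fx s z = (fderiv ℝ F (s, z)) (0, 1) := by
    intro s z h; rw [hFx]; exact (hFxline s z h).deriv
  have hFxHas : ∀ s z : ℝ, (s, z) ∈ U → HasDerivAt (fun z' => F (s, z')) (Fx s z) z := by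
    intro s z h; rw [hFx_eq s z h]; exact hFxline s z h
  -- the full derivative is C¹ on U
  have hφ : ∀ v : ℝ × ℝ, ContDiffOn ℝ 1 (fun p => (fderiv ℝ F p) v) U := by
    intro v
    exact (hF.fderiv_of_isOpen hU (by norm_num)).clm_apply contDiffOn_const
  -- second-order derivatives exist
  have hFt2 : ∀ s z : ℝ, (s, z) ∈ U →
      HasDerivAt (fun s' => Ft s' z) (deriv (fun s' => Ft s' z) s) s := by
    intro s z h
    have hφd : DifferentiableAt ℝ (fun p => (fderiv ℝ F p) ((1 : ℝ), (0 : ℝ))) (s, z) :=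
      (((hφ (1, 0)).differentiableOn one_ne_zero).differentiableAt (hU.mem_nhds h))
    have hline : DifferentiableAt ℝ (fun s' : ℝ => ((s' : ℝ), z)) s :=
      differentiableAt_id.prodMk (differentiableAt_const z)
    have hcomp : DifferentiableAt ℝ (fun s' => (fderiv ℝ F (s', z)) (1, 0)) s :=
      DifferentiableAt.comp (g := fun p => (fderiv ℝ F p) ((1 : ℝ), (0 : ℝ))) s hφd hline
    have hopen : IsOpen {s' : ℝ | (s', z) ∈ U} :=
      hU.preimage (continuous_id.prodMk continuous_const)
    have hdd : DifferentiableAt ℝ (fun s' => Ft s' z) s := by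
      apply hcomp.congr_of_eventuallyEq
      filter_upwards [hopen.mem_nhds h] with s' hs' using hFt_eq s' z hs'
    exact hdd.hasDerivAt
  have hFx2 : ∀ s z : ℝ, (s, z) ∈ U →
      HasDerivAt (fun z' => Fx s z') (deriv (fun z' => Fx s z') z) z := by
    intro s z h
    have hφd : DifferentiableAt ℝ (fun p => (fderiv ℝ F p) ((0 : ℝ), (1 : ℝ))) (s, z) :=
      (((hφ (0, 1)).differentiableOn one_ne_zero).differentiableAt (hU.mem_nhds h))
    have hline : DifferentiableAt ℝ (fun z' : ℝ => ((s : ℝ), z')) z :=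
      (differentiableAt_const s).prodMk differentiableAt_id
    have hcomp : DifferentiableAt ℝ (fun z' => (fderiv ℝ F (s, z')) (0, 1)) z :=
      DifferentiableAt.comp z hφd hline
    have hopen : IsOpen {z' : ℝ | (s, z') ∈ U} :=
      hU.preimage (continuous_const.prodMk continuous_id)
    have hdd : DifferentiableAt ℝ (fun z' => Fx s z') z := by
      apply hcomp.congr_of_eventuallyEq
      filter_upwards [hopen.mem_nhds h] with z' hz' using hFx_eq s z' hz'
    exact hdd.hasDerivAt
  -- memberships
  have hmemR1 : ∀ s ∈ Icc t (t + ε), ((s, x) : ℝ × ℝ) ∈ Icc t (t + ε) ×ˢ Icc T x :=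
    fun s hs => ⟨hs, ⟨hTx, le_refl x⟩⟩
  have hmemR2 : ∀ z ∈ Icc T x, ((t + ε, z) : ℝ × ℝ) ∈ Icc t (t + ε) ×ˢ Icc T x :=
    fun z hz => ⟨⟨htε, le_refl _⟩, hz⟩
  have hmemU1 : ∀ s ∈ Icc t (t + ε), ((s, x) : ℝ × ℝ) ∈ U := fun s hs => hRU (hmemR1 s hs)
  have hmemU2 : ∀ z ∈ Icc T x, ((t + ε, z) : ℝ × ℝ) ∈ U := fun z hz => hRU (hmemR2 z hz)
  have htT : ((t, T) : ℝ × ℝ) ∈ Icc t (t + ε) ×ˢ Icc T x := ⟨⟨le_refl t, htε⟩, ⟨le_refl T, hTx⟩⟩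
  have hA0 : 0 ≤ A := le_trans (abs_nonneg _) (hA _ htT)
  have hB0 : 0 ≤ B := le_trans (abs_nonneg _) (hB _ htT)
  have hD0 : 0 ≤ D := le_trans (abs_nonneg _) (hD _ htT)
  -- Taylor in time on [t, t+ε] along z = x
  have E1 : |F (t + ε, x) - F (t, x) - Ft t x * ((t + ε) - t)| ≤ A * ((t + ε) - t) ^ 2 / 2 := by
    apply key_taylor (f := fun s => F (s, x)) (f' := fun s => Ft s x)
      (f'' := fun s => deriv (fun s' => Ft s' x) s) htε
    · exact fun s hs => hFtHas s x (hmemU1 s hs)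
    · exact fun s hs => hFt2 s x (hmemU1 s hs)
    · exact fun s hs => hA _ (hmemR1 s hs)
  -- Taylor in space on [T, x] at right endpoint, along time t+ε
  have E2 : |F (t + ε, T) - F (t + ε, x) - Fx (t + ε) x * (T - x)| ≤ B * (x - T) ^ 2 / 2 := by
    apply key_taylor' (f := fun z => F (t + ε, z)) (f' := fun z => Fx (t + ε) z)
      (f'' := fun z => deriv (fun z' => Fx (t + ε) z') z) hTx
    · exact fun z hz => hFxHas (t + ε) z (hmemU2 z hz)
    · exact fun z hz => hFx2 (t + ε) z (hmemU2 z hz)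
    · exact fun z hz => hB _ (hmemR2 z hz)
  -- lower bound via monotonicity: δ(x - T) ≤ F(t+ε,x) - F(t+ε,T)
  have E3 : δ * (x - T) ≤ F (t + ε, x) - F (t + ε, T) := by
    have hmono : MonotoneOn (fun z => F (t + ε, z) - δ * z) (Icc T x) := by
      apply monotoneOn_of_hasDerivWithinAt_nonneg (convex_Icc T x)
        (f' := fun z => Fx (t + ε) z - δ)
      · intro z hz
        exact ((hFxHas (t + ε) z (hmemU2 z hz)).sub
          ((hasDerivAt_id z).const_mul δ |>.congr_deriv (by ring))).continuousAt.continuousWithinAt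
      · intro z hz
        rw [interior_Icc] at hz
        have := ((hFxHas (t + ε) z (hmemU2 z (Ioo_subset_Icc_self hz))).sub
          (((hasDerivAt_id z).const_mul δ).congr_deriv (mul_one δ)))
        exact this.hasDerivWithinAt
      · intro z hz
        rw [interior_Icc] at hz
        have := hδle _ (hmemR2 z (Ioo_subset_Icc_self hz))
        simp only [sub_nonneg]
        exact this
    have := hmono ⟨le_refl T, hTx⟩ ⟨hTx, le_refl x⟩ hTx
    simp only at this
    linarith
  -- upper bound: F(t+ε,x) - F(t,x) ≤ D ε
  have E4 : |F (t + ε, x) - F (t, x)| ≤ D * ε := by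
    have := Convex.norm_image_sub_le_of_norm_hasDerivWithin_le
      (f := fun s => F (s, x)) (f' := fun s => Ft s x) (C := D) (s := Icc t (t + ε))
      (fun s hs => (hFtHas s x (hmemU1 s hs)).hasDerivWithinAt)
      (fun s hs => by simpa [Real.norm_eq_abs] using hD _ (hmemR1 s hs))
      (convex_Icc _ _) ⟨le_refl t, htε⟩ ⟨htε, le_refl _⟩
    simpa [Real.norm_eq_abs, abs_of_nonneg (le_of_lt hε)] using this
  -- deduce x - T ≤ D ε / δ
  have hxT : x - T ≤ D * ε / δ := by
    rw [le_div_iff₀ hδ]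
    have h1 : F (t + ε, x) - F (t + ε, T) = F (t + ε, x) - F (t, x) := by rw [heq]
    have h2 : F (t + ε, x) - F (t, x) ≤ D * ε := le_trans (le_abs_self _) E4
    nlinarith
  have hxT0 : 0 ≤ x - T := by linarith
  set Fxx := Fx (t + ε) x with hFxx
  have hFxxδ : δ ≤ Fxx := hδle _ (hmemR1 (t + ε) ⟨htε, le_refl _⟩)
  have hFxx0 : 0 < Fxx := lt_of_lt_of_le hδ hFxxδ
  -- numerator bound
  have E1' : |F (t + ε, x) - F (t, x) - Ft t x * ε| ≤ A * ε ^ 2 / 2 := by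
    simpa [show t + ε - t = ε from by ring] using E1
  have hnum : |(x - T) * Fxx - ε * Ft t x| ≤ A * ε ^ 2 / 2 + B * (x - T) ^ 2 / 2 := by
    have h1 : (x - T) * Fxx - ε * Ft t x =
        (F (t + ε, T) - F (t + ε, x) - Fxx * (T - x))
          + (F (t + ε, x) - F (t, x) - Ft t x * ε) := by
      rw [heq]; ring
    rw [h1]
    calc |(F (t + ε, T) - F (t + ε, x) - Fxx * (T - x))
          + (F (t + ε, x) - F (t, x) - Ft t x * ε)|
        ≤ |F (t + ε, T) - F (t + ε, x) - Fxx * (T - x)|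
          + |F (t + ε, x) - F (t, x) - Ft t x * ε| := abs_add_le _ _
      _ ≤ B * (x - T) ^ 2 / 2 + A * ε ^ 2 / 2 := add_le_add E2 E1'
      _ = A * ε ^ 2 / 2 + B * (x - T) ^ 2 / 2 := by ring
  have hnum2 : |(x - T) * Fxx - ε * Ft t x| ≤ A * ε ^ 2 / 2 + B * (D * ε / δ) ^ 2 / 2 := by
    refine le_trans hnum ?_
    gcongr
  -- assemble
  have hrew : (x - T) - ε * Ft t x / Fxx = ((x - T) * Fxx - ε * Ft t x) / Fxx := by
    field_simp
  rw [hrew, abs_div, abs_of_pos hFxx0]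
  calc |(x - T) * Fxx - ε * Ft t x| / Fxx
      ≤ |(x - T) * Fxx - ε * Ft t x| / δ := by gcongr
    _ ≤ (A * ε ^ 2 / 2 + B * (D * ε / δ) ^ 2 / 2) / δ := by gcongr
    _ = ε ^ 2 * (A / (2 * δ) + B * D ^ 2 / (2 * δ ^ 3)) := by field_simp
end

section
/- Fix t ∈ [0,1) and ε ∈ (0, 1−t], and set A := e^t + e^{2t}, B := e^{t+ε} + e^{2(t+ε)}. Define x₁ := [e^t (e^{2(t+ε)} − e^{t+ε} + e^t) + e^{2t} (e^t − 2 e^{t+ε})] / (B − A) and y₁ := x₁ − e^{t+ε} + e^t. Then (x₁, y₁) is the unique pair of real numbers with x₁ < e^t satisfying the mass- and mean-preservation equations (e^t − x₁)/A = (e^{t+ε} − y₁)/B and (e^{2t} − x₁²)/A = (e^{2(t+ε)} − y₁²)/B. -/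
open Real

/-- Uniform marginals: `(x₁, y₁)` is the unique pair with `x₁ < e^t` satisfying
the mass- and mean-preservation equations for the decreasing supermartingale
coupling of `μ_t` and `μ_{t+ε}`. -/
theorem stmt3 (t ε A B x₁ y₁ : ℝ)
    (ht0 : 0 ≤ t) (ht1 : t < 1) (hε0 : 0 < ε) (hε1 : ε ≤ 1 - t)
    (hA : A = exp t + exp (2 * t))
    (hB : B = exp (t + ε) + exp (2 * (t + ε)))
    (hx₁ : x₁ = (exp t * (exp (2 * (t + ε)) - exp (t + ε) + exp t)
        + exp (2 * t) * (exp t - 2 * exp (t + ε))) / (B - A))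
    (hy₁ : y₁ = x₁ - exp (t + ε) + exp t) :
    ∀ p q : ℝ,
      (p < exp t ∧
        (exp t - p) / A = (exp (t + ε) - q) / B ∧
        (exp (2 * t) - p ^ 2) / A = (exp (2 * (t + ε)) - q ^ 2) / B)
      ↔ (p = x₁ ∧ q = y₁) := by
  have ha : (0:ℝ) < exp t := exp_pos t
  have hb : (0:ℝ) < exp (t + ε) := exp_pos _
  have hab : exp t < exp (t + ε) := exp_lt_exp.mpr (by linarith)
  have ha2 : exp (2 * t) = exp t ^ 2 := by rw [two_mul, exp_add]; ring
  have hb2 : exp (2 * (t + ε)) = exp (t + ε) ^ 2 := by rw [two_mul, exp_add]; ring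
  set a := exp t
  set b := exp (t + ε)
  simp only [ha2, hb2] at hA hB hx₁
  subst hA hB hy₁ hx₁
  have hApos : (0:ℝ) < a + a ^ 2 := by positivity
  have hBpos : (0:ℝ) < b + b ^ 2 := by positivity
  have hD : (0:ℝ) < (b + b ^ 2) - (a + a ^ 2) := by nlinarith
  intro p q
  simp only [ha2, hb2]
  constructor
  · rintro ⟨hp, h1, h2⟩
    have e1 : (a - p) * (b + b ^ 2) = (b - q) * (a + a ^ 2) :=
      (div_eq_div_iff hApos.ne' hBpos.ne').mp h1
    have e2 : (a ^ 2 - p ^ 2) * (b + b ^ 2) = (b ^ 2 - q ^ 2) * (a + a ^ 2) :=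
      (div_eq_div_iff hApos.ne' hBpos.ne').mp h2
    have hpos : (0:ℝ) < (a - p) * (b + b ^ 2) := mul_pos (by linarith) hBpos
    have hsum : (a - p) * (b + b ^ 2) * (a + p) = (a - p) * (b + b ^ 2) * (b + q) := by
      linear_combination e2 - (b + q) * e1
    have hq : q = p - b + a := by
      have := mul_left_cancel₀ hpos.ne' hsum
      linarith
    have e1' : (a - p) * (b + b ^ 2) = (2 * b - a - p) * (a + a ^ 2) := by
      rw [hq] at e1; linear_combination e1
    have hpval : p = (a * (b ^ 2 - b + a) + a ^ 2 * (a - 2 * b)) /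
        ((b + b ^ 2) - (a + a ^ 2)) := by
      rw [eq_div_iff hD.ne']
      linear_combination -e1'
    exact ⟨hpval, by rw [hq, hpval]⟩
  · rintro ⟨hp, hq⟩
    subst hp hq
    refine ⟨?_, ?_, ?_⟩
    · rw [div_lt_iff₀ hD]
      nlinarith [mul_pos (mul_pos ha (show (0:ℝ) < 1 + a by linarith)) (show (0:ℝ) < b - a by linarith)]
    · field_simp [(show (0:ℝ) < b * (1 + b) - a * (1 + a) by linarith).ne']
      ring
    · field_simp [(show (0:ℝ) < b * (1 + b) - a * (1 + a) by linarith).ne']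
      ring
end

section
/- Fix t ∈ [0,1). Then the limit as ε → 0⁺ of x₁^ε(t) := [e^t (e^{2(t+ε)} − e^{t+ε} + e^t) + e^{2t} (e^t − 2 e^{t+ε})] / (e^{t+ε} + e^{2(t+ε)} − e^t − e^{2t}) exists and equals −e^t/(1 + 2e^t). In particular the limit lies strictly between −e^{2t} and e^t. -/
open Real Filter

/-- Uniform marginals: the phase-transition point `x₁^ε(t)` converges, as
`ε → 0⁺`, to `−e^t/(1 + 2e^t)`, which lies strictly between `−e^{2t}` and `e^t`. -/
theorem stmt4 (t : ℝ) (ht0 : 0 ≤ t) (ht1 : t < 1) :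
    Tendsto (fun ε : ℝ =>
        (exp t * (exp (2 * (t + ε)) - exp (t + ε) + exp t)
          + exp (2 * t) * (exp t - 2 * exp (t + ε))) /
        (exp (t + ε) + exp (2 * (t + ε)) - exp t - exp (2 * t)))
      (nhdsWithin 0 (Set.Ioi 0)) (nhds (-exp t / (1 + 2 * exp t)))
    ∧ -exp (2 * t) < -exp t / (1 + 2 * exp t)
    ∧ -exp t / (1 + 2 * exp t) < exp t := by
  have hapos : 0 < exp t := exp_pos t
  have ha1 : (1 : ℝ) ≤ exp t := one_le_exp ht0
  refine ⟨?_, ?_, ?_⟩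
  · -- limit
    set a := exp t with ha
    have hg : Tendsto (fun ε : ℝ => a * (a * (exp ε - 1) - 1) / (1 + a * (exp ε + 1)))
        (nhdsWithin 0 (Set.Ioi 0)) (nhds (-a / (1 + 2 * a))) := by
      have hc : ContinuousAt (fun ε : ℝ => a * (a * (exp ε - 1) - 1) / (1 + a * (exp ε + 1))) 0 := by
        apply ContinuousAt.div
        · fun_prop
        · fun_prop
        · simp only [Real.exp_zero]
          nlinarith
      have h0 : a * (a * (exp 0 - 1) - 1) / (1 + a * (exp 0 + 1)) = -a / (1 + 2 * a) := by
        simp only [Real.exp_zero]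
        ring_nf
      have := hc.tendsto.mono_left (nhdsWithin_le_nhds (s := Set.Ioi (0:ℝ)))
      rwa [h0] at this
    refine hg.congr' ?_
    filter_upwards [self_mem_nhdsWithin] with ε (hε : 0 < ε)
    have hu : 1 < exp ε := by
      rw [show (1:ℝ) = exp 0 by simp]
      exact exp_lt_exp.mpr hε
    set u := exp ε with hu'
    have he1 : exp (t + ε) = a * u := exp_add t ε
    have he2 : exp (2 * (t + ε)) = (a * u) ^ 2 := by
      rw [show 2 * (t + ε) = (t + ε) + (t + ε) by ring, exp_add, he1]; ring
    have he3 : exp (2 * t) = a ^ 2 := by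
      rw [show 2 * t = t + t by ring, exp_add]; ring
    have hP : (1 : ℝ) + a * (u + 1) ≠ 0 := by nlinarith
    have hD : a * u + (a * u) ^ 2 - a - a ^ 2 ≠ 0 := by
      have : a * u + (a * u) ^ 2 - a - a ^ 2 = a * (u - 1) * (1 + a * (u + 1)) := by ring
      rw [this]
      have h1 : 0 < a * (u - 1) := by nlinarith
      have h2 : 0 < 1 + a * (u + 1) := by nlinarith
      positivity
    rw [he1, he2, he3]
    rw [div_eq_div_iff hP hD]
    ring
  · -- -e^{2t} < -a/(1+2a)
    rw [show 2 * t = t + t by ring, exp_add]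
    rw [neg_div, neg_lt_neg_iff, div_lt_iff₀ (by nlinarith)]
    nlinarith
  · have h1 : -exp t / (1 + 2 * exp t) < 0 := by
      apply div_neg_of_neg_of_pos <;> nlinarith
    linarith
end

section
/- Fix t ∈ [0,1), ε ∈ (0, 1−t] and x ∈ (−e^{2t}, e^t), and set A := e^t + e^{2t}, B := e^{t+ε} + e^{2(t+ε)}. Define T_d := x − (1/2)·((e^t − x)/A)·(B − A) and T_u := x + e^t − T_d. Then (T_d, T_u) is the unique pair of real numbers with T_d ≤ T_u satisfying (e^t − x)/A = (T_u − T_d)/B and (e^{2t} − x²)/A = (T_u² − T_d²)/B. Moreover, as ε → 0⁺, (x − T_d^ε)/ε → (1/2)·(e^t − x)·(1 + 2e^t)/(1 + e^t) and T_u^ε − x → e^t − x, where (T_d^ε, T_u^ε) denotes this pair as a function of ε. -/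
open Real Filter

/-- Uniform marginals, martingale region of the decreasing supermartingale
coupling: `(T_d, T_u)` is the unique pair with `T_d ≤ T_u` satisfying the mass-
and mean-preservation equations, and as `ε → 0⁺`, `(x − T_d^ε)/ε` converges to
`(1/2)(e^t − x)(1 + 2e^t)/(1 + e^t)` while `T_u^ε − x` converges to `e^t − x`. -/
theorem stmt5 (t ε x A B Td Tu : ℝ)
    (ht0 : 0 ≤ t) (ht1 : t < 1) (hε0 : 0 < ε) (hε1 : ε ≤ 1 - t)
    (hxl : -exp (2 * t) < x) (hxr : x < exp t)
    (hA : A = exp t + exp (2 * t))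
    (hB : B = exp (t + ε) + exp (2 * (t + ε)))
    (hTd : Td = x - (1 / 2) * ((exp t - x) / A) * (B - A))
    (hTu : Tu = x + exp t - Td) :
    (∀ p q : ℝ,
      (p ≤ q ∧
        (exp t - x) / A = (q - p) / B ∧
        (exp (2 * t) - x ^ 2) / A = (q ^ 2 - p ^ 2) / B)
      ↔ (p = Td ∧ q = Tu))
    ∧ Tendsto (fun e : ℝ =>
        (x - (x - (1 / 2) * ((exp t - x) / A)
          * ((exp (t + e) + exp (2 * (t + e))) - A))) / e)
        (nhdsWithin 0 (Set.Ioi 0))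
        (nhds ((1 / 2) * (exp t - x) * (1 + 2 * exp t) / (1 + exp t)))
    ∧ Tendsto (fun e : ℝ =>
        (x + exp t - (x - (1 / 2) * ((exp t - x) / A)
          * ((exp (t + e) + exp (2 * (t + e))) - A))) - x)
        (nhdsWithin 0 (Set.Ioi 0))
        (nhds (exp t - x)) := by
  have hE : exp (2*t) = exp t * exp t := by rw [two_mul, exp_add]
  have hA0 : (0:ℝ) < A := by rw [hA]; positivity
  have hB0 : (0:ℝ) < B := by rw [hB]; positivity
  have hex : 0 < exp t - x := sub_pos.2 hxr
  refine ⟨?_, ?_, ?_⟩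
  · -- uniqueness
    intro p q
    constructor
    · rintro ⟨hpq, h1, h2⟩
      rw [div_eq_div_iff hA0.ne' hB0.ne'] at h1 h2
      have hqp : q - p = (exp t - x) * B / A := by
        field_simp
        linarith
      have hqp0 : 0 < q - p := by rw [hqp]; positivity
      have key : (q + p - (exp t + x)) * ((q - p) * A) = 0 := by
        linear_combination (exp t + x) * h1 - h2 + B * hE
      have hsum : q + p = exp t + x := by
        rcases mul_eq_zero.mp key with h | h
        · linarith
        · nlinarith
      have hp : p = Td := by
        have h' : 2 * A * p = 2 * A * (x - (1 / 2) * ((exp t - x) / A) * (B - A)) := by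
          field_simp
          linear_combination A * hsum + h1
        have := mul_left_cancel₀ (by positivity : (2 * A) ≠ 0) h'
        rw [hTd]; exact this
      refine ⟨hp, ?_⟩
      rw [hTu, ← hp]; linarith
    · rintro ⟨hp, hq⟩
      have hqp : q - p = (exp t - x) * B / A := by
        rw [hp, hq, hTu, hTd]; field_simp; ring
      have hsum : q + p = exp t + x := by rw [hp, hq, hTu]; ring
      have hqp0 : 0 ≤ q - p := by rw [hqp]; positivity
      refine ⟨by linarith, ?_, ?_⟩
      · rw [div_eq_div_iff hA0.ne' hB0.ne', hqp]
        field_simp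
      · rw [div_eq_div_iff hA0.ne' hB0.ne']
        have hd : q ^ 2 - p ^ 2 = (q + p) * (q - p) := by ring
        rw [hd, hsum, hqp]
        field_simp
        linear_combination hE
  · -- first limit
    set c : ℝ := (1/2) * ((exp t - x)/A) with hc
    set g : ℝ → ℝ := fun e => exp (t+e) + exp (2*(t+e)) with hgdef
    have h1 : HasDerivAt (fun e : ℝ => t + e) 1 0 := by
      simpa using (hasDerivAt_id (0:ℝ)).const_add t
    have h2 : HasDerivAt (fun e : ℝ => 2*(t+e)) 2 0 := by simpa using h1.const_mul 2
    have hg : HasDerivAt g (exp t + 2 * exp (2*t)) 0 := by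
      have : HasDerivAt g (exp (t+0) * 1 + exp (2*(t+0)) * 2) 0 := (h1.exp).add (h2.exp)
      simp only [add_zero] at this
      convert this using 1
      ring
    have hs := (hasDerivAt_iff_tendsto_slope.mp hg).mono_left
        (nhdsWithin_mono 0 (fun y hy => ne_of_gt hy))
    have hlim := hs.const_mul c
    have heq : ∀ e : ℝ, c * slope g 0 e
        = (x - (x - (1 / 2) * ((exp t - x) / A) * ((exp (t + e) + exp (2 * (t + e))) - A))) / e := by
      intro e
      have hg0 : g 0 = A := by simp [hgdef, hA]
      rw [slope_def_field, hg0, sub_zero, mul_div_assoc']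
      congr 1
      simp only [hgdef]
      ring
    have hval : c * (exp t + 2 * exp (2*t))
        = (1 / 2) * (exp t - x) * (1 + 2 * exp t) / (1 + exp t) := by
      rw [hc, hA]
      have h0 : exp t ≠ 0 := (exp_pos t).ne'
      have h1' : (1:ℝ) + exp t ≠ 0 := by positivity
      field_simp
      rw [hE]; ring
    rw [← hval]
    exact hlim.congr heq
  · -- second limit
    have hcont : Continuous (fun e : ℝ =>
        (x + exp t - (x - (1 / 2) * ((exp t - x) / A)
          * ((exp (t + e) + exp (2 * (t + e))) - A))) - x) := by
      fun_prop
    have h := (hcont.tendsto 0).mono_left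
        (nhdsWithin_le_nhds (s := Set.Ioi (0:ℝ)))
    convert h using 2
    simp [hA]
end

section
/- Fix t ∈ [0,1) and ε ∈ (0, 1−t], and set A := e^t + e^{2t}, B := e^{t+ε} + e^{2(t+ε)}. Define x₁ := [e^{3t}(1 − e^{2ε}) + e^t(2e^ε + e^t(1 + e^ε))] / (1 + e^ε + e^t(1 + e^{2ε})) and y₁ := x₁ − e^{t+ε} − e^{2t}. Then (x₁, y₁) is the unique pair of real numbers with x₁ > −e^{2t} satisfying (x₁ + e^{2t})/A = (e^{t+ε} − y₁)/B and (x₁² − e^{4t})/A = (e^{2(t+ε)} − y₁²)/B. Moreover, as ε → 0⁺, x₁ = x₁^ε(t) converges to e^t. -/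
open Real Filter

lemma aux7 (u v A B x₁ y₁ : ℝ) (hu : 0 < u) (hv : 0 < v)
    (hA : A = u + u ^ 2) (hB : B = u * v + u ^ 2 * v ^ 2)
    (hx : x₁ = (u ^ 3 * (1 - v ^ 2) + u * (2 * v + u * (1 + v)))
        / (1 + v + u * (1 + v ^ 2)))
    (hy : y₁ = x₁ - u * v - u ^ 2) :
    ∀ p q : ℝ,
      (-u ^ 2 < p ∧
        (p + u ^ 2) / A = (u * v - q) / B ∧
        (p ^ 2 - u ^ 4) / A = (u ^ 2 * v ^ 2 - q ^ 2) / B)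
      ↔ (p = x₁ ∧ q = y₁) := by
  have hD : (0:ℝ) < 1 + v + u * (1 + v ^ 2) := by positivity
  have hDn : (1 + v + u * (1 + v ^ 2)) ≠ 0 := hD.ne'
  have hA0 : (0:ℝ) < A := by rw [hA]; positivity
  have hB0 : (0:ℝ) < B := by rw [hB]; positivity
  subst hy hx
  intro p q
  constructor
  · rintro ⟨hp, h1, h2⟩
    rw [div_eq_div_iff hA0.ne' hB0.ne'] at h1 h2
    have hpu : 0 < p + u ^ 2 := by linarith
    have hq0 : 0 < u * v - q := by
      by_contra h
      push_neg at h
      nlinarith [mul_pos hpu hB0, mul_nonneg (by linarith : (0:ℝ) ≤ -(u*v-q)) hA0.le]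
    have hpq : p - u ^ 2 = u * v + q := by
      have key : (p - u ^ 2) * ((u * v - q) * A) = (u * v + q) * ((u * v - q) * A) := by
        linear_combination h2 - (p - u ^ 2) * h1
      exact mul_right_cancel₀ (mul_pos hq0 hA0).ne' key
    have hq : q = p - u ^ 2 - u * v := by linarith
    have hpx : p = (u ^ 3 * (1 - v ^ 2) + u * (2 * v + u * (1 + v)))
        / (1 + v + u * (1 + v ^ 2)) := by
      rw [eq_div_iff hDn]
      apply mul_left_cancel₀ hu.ne'
      rw [hq, hA, hB] at h1
      linear_combination h1
    exact ⟨hpx, by rw [← hpx]; linarith⟩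
  · rintro ⟨hpx, hqy⟩
    subst hpx hqy
    have hxp : (u ^ 3 * (1 - v ^ 2) + u * (2 * v + u * (1 + v)))
          / (1 + v + u * (1 + v ^ 2)) + u ^ 2
        = 2 * u * (u + v) * (1 + u) / (1 + v + u * (1 + v ^ 2)) := by
      field_simp
      ring
    refine ⟨?_, ?_, ?_⟩
    · have := div_pos (by positivity : (0:ℝ) < 2 * u * (u + v) * (1 + u)) hD
      linarith [hxp ▸ this]
    · rw [div_eq_div_iff hA0.ne' hB0.ne', hA, hB]
      field_simp
      ring
    · rw [div_eq_div_iff hA0.ne' hB0.ne', hA, hB]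
      field_simp
      ring


/-- Uniform marginals, increasing supermartingale coupling: `(x₁, y₁)` is the
unique pair with `x₁ > −e^{2t}` satisfying the mass- and mean-preservation
equations, and `x₁^ε(t) → e^t` as `ε → 0⁺`. -/
theorem stmt7 (t ε A B x₁ y₁ : ℝ)
    (ht0 : 0 ≤ t) (ht1 : t < 1) (hε0 : 0 < ε) (hε1 : ε ≤ 1 - t)
    (hA : A = exp t + exp (2 * t))
    (hB : B = exp (t + ε) + exp (2 * (t + ε)))
    (hx₁ : x₁ = (exp (3 * t) * (1 - exp (2 * ε))
        + exp t * (2 * exp ε + exp t * (1 + exp ε)))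
        / (1 + exp ε + exp t * (1 + exp (2 * ε))))
    (hy₁ : y₁ = x₁ - exp (t + ε) - exp (2 * t)) :
    (∀ p q : ℝ,
      (-exp (2 * t) < p ∧
        (p + exp (2 * t)) / A = (exp (t + ε) - q) / B ∧
        (p ^ 2 - exp (4 * t)) / A = (exp (2 * (t + ε)) - q ^ 2) / B)
      ↔ (p = x₁ ∧ q = y₁))
    ∧ Tendsto (fun e : ℝ =>
        (exp (3 * t) * (1 - exp (2 * e))
          + exp t * (2 * exp e + exp t * (1 + exp e)))
          / (1 + exp e + exp t * (1 + exp (2 * e))))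
        (nhdsWithin 0 (Set.Ioi 0)) (nhds (exp t)) := by
  have hu : (0:ℝ) < exp t := exp_pos t
  have hv : (0:ℝ) < exp ε := exp_pos ε
  have e2t : exp (2 * t) = exp t ^ 2 := by rw [two_mul, exp_add]; ring
  have e3t : exp (3 * t) = exp t ^ 3 := by
    rw [show (3:ℝ) * t = t + t + t by ring, exp_add, exp_add]; ring
  have e4t : exp (4 * t) = exp t ^ 4 := by
    rw [show (4:ℝ) * t = t + t + (t + t) by ring, exp_add, exp_add]; ring
  have etε : exp (t + ε) = exp t * exp ε := exp_add t ε
  have e2tε : exp (2 * (t + ε)) = exp t ^ 2 * exp ε ^ 2 := by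
    rw [two_mul, exp_add, exp_add]; ring
  have e2ε : exp (2 * ε) = exp ε ^ 2 := by rw [two_mul, exp_add]; ring
  constructor
  · rw [e2t, e4t, etε, e2tε]
    exact aux7 (exp t) (exp ε) A B x₁ y₁ hu hv
      (by rw [hA, e2t]) (by rw [hB, etε, e2tε])
      (by rw [hx₁, e3t, e2ε]) (by rw [hy₁, etε, e2t])
  · have hcont : ContinuousAt (fun e : ℝ =>
        (exp (3 * t) * (1 - exp (2 * e)) + exp t * (2 * exp e + exp t * (1 + exp e)))
          / (1 + exp e + exp t * (1 + exp (2 * e)))) 0 := by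
      apply ContinuousAt.div
      · fun_prop
      · fun_prop
      · simp only [mul_zero, exp_zero]
        positivity
    have h0 : (exp (3 * t) * (1 - exp (2 * (0:ℝ)))
        + exp t * (2 * exp 0 + exp t * (1 + exp 0)))
        / (1 + exp 0 + exp t * (1 + exp (2 * (0:ℝ)))) = exp t := by
      simp only [mul_zero, exp_zero]
      rw [div_eq_iff (by positivity)]
      ring
    have h := hcont.tendsto.mono_left (nhdsWithin_le_nhds (s := Set.Ioi (0:ℝ)))
    rw [h0] at h
    exact h
end

section
/- Fix t ∈ [0,1), ε ∈ (0, 1−t] and x ∈ (−e^{2t}, e^t), and set A := e^t + e^{2t}, B := e^{t+ε} + e^{2(t+ε)}. Define T_u := (1/2)·[ e^ε (1 + e^{t+ε})(x + e^{2t})/(1 + e^t) + x − e^{2t} ] and T_d := x − e^{2t} − T_u. Then (T_d, T_u) is the unique pair of real numbers with T_d ≤ T_u satisfying (x + e^{2t})/A = (T_u − T_d)/B and (x² − e^{4t})/A = (T_u² − T_d²)/B. Moreover, as ε → 0⁺, T_u^ε → x (so that x − T_d^ε → x + e^{2t}) and (T_u^ε − x)/ε → (1 + 2e^t)(x + e^{2t})/(2(1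 + e^t)), where (T_d^ε, T_u^ε) denotes this pair as a function of ε. -/
open Real Filter

set_option maxHeartbeats 1000000

/-- Uniform marginals, martingale (left-curtain) region of the increasing
supermartingale coupling: `(T_d, T_u)` is the unique pair with `T_d ≤ T_u`
satisfying the mass- and mean-preservation equations, and, as `ε → 0⁺`,
`T_u^ε → x`, `x − T_d^ε → x + e^{2t}`, and
`(T_u^ε − x)/ε → (1 + 2e^t)(x + e^{2t})/(2(1 + e^t))`. -/
theorem stmt8 (t ε x A B Td Tu : ℝ)
    (ht0 : 0 ≤ t) (ht1 : t < 1) (hε0 : 0 < ε) (hε1 : ε ≤ 1 - t)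
    (hxl : -exp (2 * t) < x) (hxr : x < exp t)
    (hA : A = exp t + exp (2 * t))
    (hB : B = exp (t + ε) + exp (2 * (t + ε)))
    (hTu : Tu = (1 / 2) * (exp ε * (1 + exp (t + ε)) * (x + exp (2 * t))
        / (1 + exp t) + x - exp (2 * t)))
    (hTd : Td = x - exp (2 * t) - Tu) :
    (∀ p q : ℝ,
      (p ≤ q ∧
        (x + exp (2 * t)) / A = (q - p) / B ∧
        (x ^ 2 - exp (4 * t)) / A = (q ^ 2 - p ^ 2) / B)
      ↔ (p = Td ∧ q = Tu))
    ∧ Tendsto (fun e : ℝ =>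
        (1 / 2) * (exp e * (1 + exp (t + e)) * (x + exp (2 * t))
          / (1 + exp t) + x - exp (2 * t)))
        (nhdsWithin 0 (Set.Ioi 0)) (nhds x)
    ∧ Tendsto (fun e : ℝ =>
        x - (x - exp (2 * t)
          - (1 / 2) * (exp e * (1 + exp (t + e)) * (x + exp (2 * t))
            / (1 + exp t) + x - exp (2 * t))))
        (nhdsWithin 0 (Set.Ioi 0)) (nhds (x + exp (2 * t)))
    ∧ Tendsto (fun e : ℝ =>
        ((1 / 2) * (exp e * (1 + exp (t + e)) * (x + exp (2 * t))
          / (1 + exp t) + x - exp (2 * t)) - x) / e)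
        (nhdsWithin 0 (Set.Ioi 0))
        (nhds ((1 + 2 * exp t) * (x + exp (2 * t)) / (2 * (1 + exp t)))) := by
  have ha : (0:ℝ) < exp t := exp_pos t
  have h1a : (0:ℝ) < 1 + exp t := by linarith
  have h1a' : (1:ℝ) + exp t ≠ 0 := ne_of_gt h1a
  have e2t : exp (2*t) = exp t ^ 2 := by rw [two_mul, exp_add]; ring
  have e4t : exp (4*t) = exp t ^ 4 := by
    rw [show (4:ℝ)*t = (t+t)+(t+t) by ring, exp_add, exp_add]; ring
  have ete : exp (t+ε) = exp t * exp ε := exp_add t ε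
  have e2te : exp (2*(t+ε)) = (exp t * exp ε)^2 := by
    rw [show 2*(t+ε) = (t+ε)+(t+ε) by ring, exp_add, ete]; ring
  have hb : (0:ℝ) < exp ε := exp_pos ε
  have hApos : 0 < A := by rw [hA]; positivity
  have hBpos : 0 < B := by rw [hB]; positivity
  have hxpos : 0 < x + exp (2*t) := by linarith
  constructor
  · intro p q
    constructor
    · rintro ⟨hpq, heq1, heq2⟩
      have hqp : (x + exp (2*t)) * B = (q - p) * A :=
        (div_eq_div_iff (ne_of_gt hApos) (ne_of_gt hBpos)).mp heq1
      have hqp2 : (x^2 - exp (4*t)) * B = (q^2 - p^2) * A :=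
        (div_eq_div_iff (ne_of_gt hApos) (ne_of_gt hBpos)).mp heq2
      have hqppos : 0 < q - p := by
        nlinarith [mul_pos hxpos hBpos]
      have hsum : q + p = x - exp (2*t) := by
        have hfac : x^2 - exp (4*t) = (x + exp (2*t)) * (x - exp (2*t)) := by
          rw [e4t, e2t]; ring
        have key : (q - p) * ((q + p) * A) = (q - p) * ((x - exp (2*t)) * A) := by
          calc (q - p) * ((q + p) * A) = (q^2 - p^2) * A := by ring
            _ = (x^2 - exp (4*t)) * B := hqp2.symm
            _ = (x - exp (2*t)) * ((x + exp (2*t)) * B) := by rw [hfac]; ring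
            _ = (x - exp (2*t)) * ((q - p) * A) := by rw [hqp]
            _ = (q - p) * ((x - exp (2*t)) * A) := by ring
        have := mul_left_cancel₀ (ne_of_gt hqppos) key
        exact mul_right_cancel₀ (ne_of_gt hApos) this
      have hTu' : Tu = ((x - exp (2*t)) + (x + exp (2*t)) * B / A) / 2 := by
        rw [hTu, hA, hB, e2t, ete, e2te]
        field_simp
        ring
      have hq : q = Tu := by
        have hv : (x + exp (2*t)) * B / A = q - p := by
          rw [hqp, mul_div_assoc, div_self (ne_of_gt hApos), mul_one]
        rw [hTu', hv]; linarith
      exact ⟨by rw [hTd]; linarith, hq⟩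
    · rintro ⟨hp, hq⟩
      have hdiff : Tu - Td = exp ε * (1 + exp (t+ε)) * (x + exp (2*t)) / (1 + exp t) := by
        rw [hTd, hTu]; ring
      have h1ab : (0:ℝ) < 1 + exp (t+ε) := by positivity
      refine ⟨?_, ?_, ?_⟩
      · rw [hp, hq]
        nlinarith [div_pos (mul_pos (mul_pos hb h1ab) hxpos) h1a]
      · rw [hp, hq, hTd, hTu, hA, hB, e2t, ete, e2te]
        field_simp
        ring
      · rw [hp, hq, hTd, hTu, hA, hB, e2t, e4t, ete, e2te]
        field_simp
        ring
  · -- limits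
    set F : ℝ → ℝ := fun e : ℝ =>
        (1 / 2) * (exp e * (1 + exp (t + e)) * (x + exp (2 * t))
          / (1 + exp t) + x - exp (2 * t)) with hF
    have hF0 : F 0 = x := by
      simp only [hF, exp_zero, add_zero, one_mul]
      field_simp
      ring
    have hcont : Continuous F := by
      rw [hF]; fun_prop
    have L1 : Tendsto F (nhdsWithin 0 (Set.Ioi 0)) (nhds x) := by
      have := hcont.tendsto 0
      rw [hF0] at this
      exact this.mono_left nhdsWithin_le_nhds
    refine ⟨L1, ?_, ?_⟩
    · have L2 : Tendsto (fun e => x - (x - exp (2*t) - F e)) (nhdsWithin 0 (Set.Ioi 0))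
          (nhds (x - (x - exp (2*t) - x))) :=
        tendsto_const_nhds.sub (tendsto_const_nhds.sub L1)
      have : x - (x - exp (2*t) - x) = x + exp (2*t) := by ring
      rw [this] at L2
      exact L2
    · -- derivative
      have h2 : HasDerivAt (fun e : ℝ => t + e) 1 0 := by
        simpa using (hasDerivAt_id (0:ℝ)).const_add t
      have h3 : HasDerivAt (fun e : ℝ => exp (t + e)) (exp (t + 0) * 1) 0 := h2.exp
      have h4 : HasDerivAt (fun e : ℝ => 1 + exp (t + e)) (exp (t + 0) * 1) 0 :=
        h3.const_add 1
      have h1 : HasDerivAt (fun e : ℝ => exp e) (exp 0) 0 := Real.hasDerivAt_exp 0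
      have h5 := h1.mul h4
      have h6 := (h5.mul_const (x + exp (2*t))).div_const (1 + exp t)
      have h7 := (h6.add_const x).sub_const (exp (2*t))
      have h8 := HasDerivAt.const_mul (1/2 : ℝ) h7
      have hFd : HasDerivAt F
          ((1/2) * ((exp 0 * (1 + exp (t+0)) + exp 0 * (exp (t+0) * 1)) * (x + exp (2*t))
            / (1 + exp t))) 0 := h8
      have hDval : (1/2) * ((exp 0 * (1 + exp (t+0)) + exp 0 * (exp (t+0) * 1))
            * (x + exp (2*t)) / (1 + exp t))
          = (1 + 2 * exp t) * (x + exp (2*t)) / (2 * (1 + exp t)) := by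
        rw [exp_zero, add_zero, one_mul, mul_one]
        rw [eq_div_iff (by positivity : (2 * (1 + exp t)) ≠ 0)]
        field_simp
        ring
      rw [hDval] at hFd
      have hs := hasDerivAt_iff_tendsto_slope.mp hFd
      have hsub : Set.Ioi (0:ℝ) ⊆ {(0:ℝ)}ᶜ := by
        intro y hy
        simp only [Set.mem_compl_iff, Set.mem_singleton_iff]
        exact ne_of_gt hy
      have hs' := hs.mono_left (nhdsWithin_mono 0 hsub)
      have heq : ∀ e : ℝ, slope F 0 e = (F e - x) / e := by
        intro e
        rw [slope_def_field, hF0, sub_zero]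
      exact (hs'.congr heq)
end

section
/- Let 0 < t and 0 < ε, and for s > 0 let f(s,z) := e^{−(z+s)²/(2s)}/√(2πs). Suppose x₁, y₁ ∈ ℝ satisfy ∫_{x₁}^∞ f(t,z) dz = ∫_{y₁}^∞ f(t+ε,z) dz and ∫_{x₁}^∞ z·f(t,z) dz = ∫_{y₁}^∞ z·f(t+ε,z) dz. Then (x₁ + t)/√t = (y₁ + t + ε)/√(t+ε), and ε·(1 − Φ((x₁ + t)/√t)) = (√(t+ε) − √t)·φ((x₁ + t)/√t). -/
open Real MeasureTheory Set Filter

/-- Standard normal distribution function `Φ`. -/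
noncomputable def normCdf (x : ℝ) : ℝ := ∫ u in Iic x, exp (-u ^ 2 / 2) / sqrt (2 * π)

/-- Standard normal density `φ`. -/
noncomputable def normPdf (x : ℝ) : ℝ := exp (-x ^ 2 / 2) / sqrt (2 * π)

lemma normPdf_pos (x : ℝ) : 0 < normPdf x := by
  have h2π : 0 < sqrt (2 * π) := Real.sqrt_pos.2 (by positivity)
  exact div_pos (exp_pos _) h2π

lemma integrable_normPdf : Integrable normPdf := by
  have h := integrable_exp_neg_mul_sq (b := 1/2) (by norm_num)
  have : normPdf = fun x => exp (-(1/2) * x ^ 2) / sqrt (2 * π) := by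
    funext x
    unfold normPdf
    ring_nf
  rw [this]
  exact h.div_const _

lemma integrable_mul_normPdf : Integrable (fun x => x * normPdf x) := by
  have h := integrable_mul_exp_neg_mul_sq (b := 1/2) (by norm_num)
  have : (fun x => x * normPdf x) = fun x => (x * exp (-(1/2) * x ^ 2)) / sqrt (2 * π) := by
    funext x
    unfold normPdf
    ring_nf
  rw [this]
  exact h.div_const _

lemma hasDerivAt_neg_normPdf (x : ℝ) :
    HasDerivAt (fun u => -normPdf u) (x * normPdf x) x := by
  have h1 : HasDerivAt (fun u : ℝ => -u ^ 2 / 2) (-x) x := by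
    have h := ((hasDerivAt_pow 2 x).neg).div_const 2
    exact h.congr_deriv (by norm_num; ring)
  have h2 := h1.exp
  have h3 := (h2.div_const (sqrt (2 * π))).neg
  exact h3.congr_deriv (by unfold normPdf; ring)

lemma tendsto_neg_normPdf : Tendsto (fun u => -normPdf u) atTop (nhds 0) := by
  have h1 : Tendsto (fun u : ℝ => -u ^ 2 / 2) atTop atBot := by
    apply Tendsto.atBot_div_const (by norm_num : (0:ℝ) < 2)
    exact tendsto_neg_atBot_iff.2 (tendsto_pow_atTop two_ne_zero)
  have h2 : Tendsto (fun u : ℝ => exp (-u ^ 2 / 2)) atTop (nhds 0) :=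
    Real.tendsto_exp_atBot.comp h1
  have h3 := (h2.div_const (sqrt (2 * π))).neg
  simp only [zero_div, neg_zero] at h3
  exact h3

lemma integral_mul_normPdf_Ioi (a : ℝ) :
    ∫ u in Ioi a, u * normPdf u = normPdf a := by
  have := integral_Ioi_of_hasDerivAt_of_tendsto' (f := fun u => -normPdf u)
    (f' := fun u => u * normPdf u) (a := a) (m := 0)
    (fun x _ => hasDerivAt_neg_normPdf x)
    integrable_mul_normPdf.integrableOn tendsto_neg_normPdf
  rw [this]; ring

lemma integral_normPdf : ∫ u, normPdf u = 1 := by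
  have h := integral_gaussian (1/2 : ℝ)
  have heq : (fun x : ℝ => normPdf x) = fun x => exp (-(1/2) * x ^ 2) / sqrt (2 * π) := by
    funext x; unfold normPdf; ring_nf
  have h2π : sqrt (2 * π) ≠ 0 := by positivity
  calc ∫ u, normPdf u = ∫ u, exp (-(1/2) * u ^ 2) / sqrt (2 * π) := by rw [heq]
    _ = (∫ u, exp (-(1/2) * u ^ 2)) / sqrt (2 * π) := by rw [integral_div]
    _ = sqrt (π / (1/2)) / sqrt (2 * π) := by rw [h]
    _ = 1 := by
        rw [show π / (1/2 : ℝ) = 2 * π by ring]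
        exact div_self h2π

lemma integral_normPdf_Ioi (a : ℝ) :
    ∫ u in Ioi a, normPdf u = 1 - normCdf a := by
  have h := intervalIntegral.integral_Iic_add_Ioi (b := a) (f := normPdf) (μ := volume)
    integrable_normPdf.integrableOn integrable_normPdf.integrableOn
  rw [integral_normPdf] at h
  have : normCdf a = ∫ u in Iic a, normPdf u := rfl
  linarith [this ▸ h]

lemma tail_strictAnti : StrictAnti (fun a => ∫ u in Ioi a, normPdf u) := by
  intro a b hab
  simp only
  rw [← Ioc_union_Ioi_eq_Ioi hab.le,
    setIntegral_union Ioc_disjoint_Ioi_same measurableSet_Ioi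
      integrable_normPdf.integrableOn integrable_normPdf.integrableOn]
  have hpos : 0 < ∫ u in Ioc a b, normPdf u := by
    rw [setIntegral_pos_iff_support_of_nonneg_ae
      (Eventually.of_forall fun x => (normPdf_pos x).le)
      integrable_normPdf.integrableOn]
    have : Function.support normPdf ∩ Ioc a b = Ioc a b := by
      rw [inter_eq_right]
      intro x _
      exact (normPdf_pos x).ne'
    rw [this]
    simpa [Real.volume_Ioc] using hab
  linarith

lemma setIntegral_Ioi_comp_add (f : ℝ → ℝ) (a d : ℝ) :
    ∫ x in Ioi a, f (x + d) = ∫ x in Ioi (a + d), f x := by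
  have A : MeasurableEmbedding fun x : ℝ => x + d :=
    (Homeomorph.addRight d).isClosedEmbedding.measurableEmbedding
  have hpre : (fun x : ℝ => x + d) ⁻¹' Ioi (a + d) = Ioi a := by
    ext x
    simp
  calc ∫ x in Ioi a, f (x + d)
      = ∫ x in (fun x : ℝ => x + d) ⁻¹' Ioi (a + d), f (x + d) := by rw [hpre]
    _ = ∫ y in Ioi (a + d), f y ∂(Measure.map (fun x : ℝ => x + d) volume) :=
        (A.setIntegral_map (fun y => f y) (Ioi (a + d))).symm
    _ = ∫ y in Ioi (a + d), f y := by rw [map_add_right_eq_self]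

lemma tail_mass (s x : ℝ) (hs : 0 < s) :
    ∫ z in Ioi x, exp (-(z + s) ^ 2 / (2 * s)) / sqrt (2 * π * s)
      = ∫ u in Ioi ((x + s) / sqrt s), normPdf u := by
  have hss : 0 < sqrt s := Real.sqrt_pos.2 hs
  have hsq : sqrt s * sqrt s = s := Real.mul_self_sqrt hs.le
  have step1 : ∫ z in Ioi x, exp (-(z + s) ^ 2 / (2 * s)) / sqrt (2 * π * s)
      = ∫ w in Ioi (x + s), exp (-w ^ 2 / (2 * s)) / sqrt (2 * π * s) :=
    setIntegral_Ioi_comp_add (fun w => exp (-w ^ 2 / (2 * s)) / sqrt (2 * π * s)) x s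
  have step2 : ∫ w in Ioi (x + s), exp (-w ^ 2 / (2 * s)) / sqrt (2 * π * s)
      = (sqrt s)⁻¹⁻¹ • ∫ u in Ioi ((x + s) * (sqrt s)⁻¹),
          exp (-u ^ 2 / 2) / sqrt (2 * π * s) := by
    have := integral_comp_mul_right_Ioi
      (fun u => exp (-u ^ 2 / 2) / sqrt (2 * π * s)) (x + s)
      (inv_pos.2 hss)
    rw [← this]
    refine setIntegral_congr_fun measurableSet_Ioi fun w _ => ?_
    have e : -(w * (sqrt s)⁻¹) ^ 2 / 2 = -w ^ 2 / (2 * s) := by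
      rw [mul_pow, inv_pow, sq_sqrt hs.le]
      field_simp [hs.ne']
    rw [e]
  rw [step1, step2]
  rw [inv_inv, ← integral_smul]
  rw [show (x + s) * (sqrt s)⁻¹ = (x + s) / sqrt s from (div_eq_mul_inv _ _).symm]
  refine setIntegral_congr_fun measurableSet_Ioi fun u _ => ?_
  have h2πs : sqrt (2 * π * s) = sqrt (2 * π) * sqrt s := by
    rw [← Real.sqrt_mul (by positivity)]
  unfold normPdf
  rw [smul_eq_mul, h2πs]
  field_simp

lemma tail_mean (s x : ℝ) (hs : 0 < s) :
    ∫ z in Ioi x, z * (exp (-(z + s) ^ 2 / (2 * s)) / sqrt (2 * π * s))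
      = sqrt s * normPdf ((x + s) / sqrt s)
        - s * ∫ u in Ioi ((x + s) / sqrt s), normPdf u := by
  have hss : 0 < sqrt s := Real.sqrt_pos.2 hs
  have hsq : sqrt s * sqrt s = s := Real.mul_self_sqrt hs.le
  have step1 : ∫ z in Ioi x, z * (exp (-(z + s) ^ 2 / (2 * s)) / sqrt (2 * π * s))
      = ∫ w in Ioi (x + s), (w - s) * (exp (-w ^ 2 / (2 * s)) / sqrt (2 * π * s)) := by
    have := setIntegral_Ioi_comp_add
      (fun w => (w - s) * (exp (-w ^ 2 / (2 * s)) / sqrt (2 * π * s))) x s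
    rw [← this]
    refine setIntegral_congr_fun measurableSet_Ioi fun z _ => ?_
    ring
  have step2 : ∫ w in Ioi (x + s), (w - s) * (exp (-w ^ 2 / (2 * s)) / sqrt (2 * π * s))
      = (sqrt s)⁻¹⁻¹ • ∫ u in Ioi ((x + s) * (sqrt s)⁻¹),
          (sqrt s * u - s) * (exp (-u ^ 2 / 2) / sqrt (2 * π * s)) := by
    have := integral_comp_mul_right_Ioi
      (fun u => (sqrt s * u - s) * (exp (-u ^ 2 / 2) / sqrt (2 * π * s))) (x + s)
      (inv_pos.2 hss)
    rw [← this]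
    refine setIntegral_congr_fun measurableSet_Ioi fun w _ => ?_
    have h1 : sqrt s * (w * (sqrt s)⁻¹) = w := by
      field_simp
    have e : -(w * (sqrt s)⁻¹) ^ 2 / 2 = -w ^ 2 / (2 * s) := by
      rw [mul_pow, inv_pow, sq_sqrt hs.le]
      field_simp [hs.ne']
    rw [h1, e]
  have h2πs : sqrt (2 * π * s) = sqrt (2 * π) * sqrt s := by
    rw [← Real.sqrt_mul (by positivity)]
  have step3 : (sqrt s)⁻¹⁻¹ • ∫ u in Ioi ((x + s) * (sqrt s)⁻¹),
          (sqrt s * u - s) * (exp (-u ^ 2 / 2) / sqrt (2 * π * s))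
      = ∫ u in Ioi ((x + s) / sqrt s), (sqrt s * u - s) * normPdf u := by
    rw [inv_inv, ← integral_smul,
      show (x + s) * (sqrt s)⁻¹ = (x + s) / sqrt s from (div_eq_mul_inv _ _).symm]
    refine setIntegral_congr_fun measurableSet_Ioi fun u _ => ?_
    unfold normPdf
    rw [smul_eq_mul, h2πs]
    field_simp
  have hint1 : IntegrableOn (fun u => sqrt s * (u * normPdf u)) (Ioi ((x + s) / sqrt s)) :=
    (integrable_mul_normPdf.const_mul _).integrableOn
  have hint2 : IntegrableOn (fun u => s * normPdf u) (Ioi ((x + s) / sqrt s)) :=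
    (integrable_normPdf.const_mul _).integrableOn
  have step4 : ∫ u in Ioi ((x + s) / sqrt s), (sqrt s * u - s) * normPdf u
      = sqrt s * normPdf ((x + s) / sqrt s)
        - s * ∫ u in Ioi ((x + s) / sqrt s), normPdf u := by
    have : (fun u => (sqrt s * u - s) * normPdf u)
        = fun u => sqrt s * (u * normPdf u) - s * normPdf u := by
      funext u; ring
    rw [this, integral_sub hint1 hint2, integral_const_mul, integral_const_mul,
      integral_mul_normPdf_Ioi]
  rw [step1, step2, step3, step4]

/-- Bachelier marginals: the mass- and mean-preservation conditions for the
phase-transition points `(x₁, y₁)` imply `(x₁+t)/√t = (y₁+t+ε)/√(t+ε)` and the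
algebraic equation `ε(1 − Φ((x₁+t)/√t)) = (√(t+ε) − √t)·φ((x₁+t)/√t)`. -/
theorem stmt9 (t ε x₁ y₁ : ℝ) (ht : 0 < t) (hε : 0 < ε)
    (hmass : ∫ z in Ioi x₁, exp (-(z + t) ^ 2 / (2 * t)) / sqrt (2 * π * t)
      = ∫ z in Ioi y₁, exp (-(z + (t + ε)) ^ 2 / (2 * (t + ε))) / sqrt (2 * π * (t + ε)))
    (hmean : ∫ z in Ioi x₁, z * (exp (-(z + t) ^ 2 / (2 * t)) / sqrt (2 * π * t))
      = ∫ z in Ioi y₁, z * (exp (-(z + (t + ε)) ^ 2 / (2 * (t + ε))) / sqrt (2 * π * (t + ε)))) :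
    (x₁ + t) / sqrt t = (y₁ + t + ε) / sqrt (t + ε)
    ∧ ε * (1 - normCdf ((x₁ + t) / sqrt t))
      = (sqrt (t + ε) - sqrt t) * normPdf ((x₁ + t) / sqrt t) := by
  have htε : 0 < t + ε := by linarith
  set a := (x₁ + t) / sqrt t with ha
  set b := (y₁ + (t + ε)) / sqrt (t + ε) with hb
  have hmass' : ∫ u in Ioi a, normPdf u = ∫ u in Ioi b, normPdf u := by
    rw [← tail_mass t x₁ ht, ← tail_mass (t + ε) y₁ htε, hmass]
  have hab : a = b := by
    rcases lt_trichotomy a b with h | h | h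
    · exact absurd hmass' (tail_strictAnti h).ne'
    · exact h
    · exact absurd hmass' (tail_strictAnti h).ne
  have hmean' : sqrt t * normPdf a - t * ∫ u in Ioi a, normPdf u
      = sqrt (t + ε) * normPdf b - (t + ε) * ∫ u in Ioi b, normPdf u := by
    rw [← tail_mean t x₁ ht, ← tail_mean (t + ε) y₁ htε, hmean]
  rw [← hab] at hmean'
  have htail := integral_normPdf_Ioi a
  constructor
  · rw [hab, hb, add_assoc]
  · rw [← htail]
    linarith
end

section
/- Let 0 < t and 0 < ε, and for s > 0 and z > 0 let f(s,z) := e^{−(ln z + s)²/(2s)}/(z√(2πs)). Suppose x₁ > 0 and y₁ > 0 satisfy ∫_{x₁}^∞ f(t,z) dz = ∫_{y₁}^∞ f(t+ε,z) dz and ∫_{x₁}^∞ z·f(t,z) dz = ∫_{y₁}^∞ z·f(t+ε,z) dz. Then (ln x₁ + t)/√t = (ln y₁ + t + ε)/√(t+ε), and 1 − Φ(ln x₁/√t) = e^{−ε/2}·(1 − Φ((ln x₁ + t)/√t − √(t+ε))). -/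
open Real MeasureTheory Set
open Filter

noncomputable def gauss (u : ℝ) : ℝ := exp (-u ^ 2 / 2) / sqrt (2 * π)

lemma gauss_integrable : Integrable gauss := by
  have h : Integrable (fun u : ℝ => exp (-(1/2 : ℝ) * u ^ 2)) := integrable_exp_neg_mul_sq (by norm_num)
  have := h.div_const (sqrt (2 * π))
  refine this.congr (Filter.Eventually.of_forall fun u => ?_)
  simp [gauss]; ring_nf

lemma gauss_total : ∫ u, gauss u = 1 := by
  have h : ∫ u : ℝ, exp (-(1/2 : ℝ) * u ^ 2) = sqrt (π / (1/2)) := integral_gaussian (1/2)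
  have h2 : ∫ u : ℝ, gauss u = (∫ u : ℝ, exp (-(1/2 : ℝ) * u ^ 2)) / sqrt (2 * π) := by
    rw [← integral_div]
    congr 1; funext u; simp [gauss]; ring_nf
  rw [h2, h]
  rw [show (π / (1/2) : ℝ) = 2 * π by ring]
  have : sqrt (2 * π) ≠ 0 := by positivity
  field_simp

lemma gauss_Ioi (c : ℝ) : ∫ u in Ioi c, gauss u = 1 - ∫ u in Iic c, gauss u := by
  have h := setIntegral_union (Iic_disjoint_Ioi (le_refl c)) measurableSet_Ioi
    gauss_integrable.integrableOn gauss_integrable.integrableOn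
  rw [Iic_union_Ioi, setIntegral_univ, gauss_total] at h
  linarith

lemma normCdf_strictMono : StrictMono normCdf := by
  intro a b hab
  have hsplit : (Iic a) ∪ (Ioc a b) = Iic b := Iic_union_Ioc_eq_Iic hab.le
  have h := setIntegral_union (Iic_disjoint_Ioc (le_refl a)) measurableSet_Ioc
    (gauss_integrable.integrableOn (s := Iic a)) (gauss_integrable.integrableOn (s := Ioc a b))
  rw [hsplit] at h
  have hpos : 0 < ∫ u in Ioc a b, gauss u := by
    rw [← intervalIntegral.integral_of_le hab.le]
    apply intervalIntegral.intervalIntegral_pos_of_pos_on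
      gauss_integrable.intervalIntegrable
    · intro x _; unfold gauss; positivity
    · exact hab
  have : normCdf b = normCdf a + ∫ u in Ioc a b, gauss u := by
    show (∫ u in Iic b, gauss u) = (∫ u in Iic a, gauss u) + _; rw [h]
  linarith

section Subst
variable {s x : ℝ}

lemma keyA (hs : 0 < s) (hx : 0 < x) :
    ∫ z in Ioi x, exp (-(log z + s) ^ 2 / (2 * s)) / (z * sqrt (2 * π * s))
      = ∫ u in Ioi ((log x + s) / sqrt s), gauss u := by
  have hss : sqrt s ≠ 0 := by positivity
  have hs2 : sqrt s * sqrt s = s := mul_self_sqrt hs.le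
  set a : ℝ := (log x + s) / sqrt s with ha
  set f : ℝ → ℝ := fun u => exp (sqrt s * u - s) with hf
  set f' : ℝ → ℝ := fun u => exp (sqrt s * u - s) * sqrt s with hf'
  set g : ℝ → ℝ := fun z => exp (-(log z + s) ^ 2 / (2 * s)) / (z * sqrt (2 * π * s)) with hg
  have hfa : f a = x := by
    simp only [hf, ha]
    rw [mul_div_cancel₀ _ hss]
    simp [exp_log hx]
  have hderiv : ∀ u : ℝ, HasDerivAt f (f' u) u := by
    intro u
    have h1 : HasDerivAt (fun u : ℝ => sqrt s * u - s) (sqrt s) u := by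
      simpa using ((hasDerivAt_id u).const_mul (sqrt s)).sub_const s
    simpa [hf, hf'] using h1.exp
  have hmono : StrictMono f := by
    intro u v huv
    apply exp_lt_exp.2
    have : 0 < sqrt s := sqrt_pos.2 hs
    nlinarith
  have hkey : ∀ u : ℝ, g (f u) * f' u = gauss u := by
    intro u
    have hfpos : 0 < f u := exp_pos _
    simp only [hg, hf, hf', gauss, log_exp]
    have h1 : -(sqrt s * u - s + s) ^ 2 / (2 * s) = -u ^ 2 / 2 := by
      field_simp; nlinarith
    rw [h1, sqrt_mul (by positivity : (0:ℝ) ≤ 2 * π)]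
    have h2 : sqrt (2 * π) ≠ 0 := by positivity
    have h3 : exp (sqrt s * u - s) ≠ 0 := exp_ne_zero _
    field_simp
  have himg : ∀ u : ℝ, 0 < f u := fun u => exp_pos _
  have hcont : ContinuousOn g (f '' Ioi a) := by
    apply ContinuousOn.mono (s := {z : ℝ | 0 < z})
    · apply ContinuousOn.div
      · apply ContinuousOn.rexp
        apply ContinuousOn.div_const
        apply ContinuousOn.neg
        apply ContinuousOn.pow
        refine ContinuousOn.add (Real.continuousOn_log.mono ?_) continuousOn_const
        intro z hz
        simpa using ne_of_gt (show (0:ℝ) < z from hz)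
      · exact ContinuousOn.mul continuousOn_id continuousOn_const
      · intro z hz
        have : (0:ℝ) < z := hz
        positivity
    · rintro _ ⟨u, _, rfl⟩; exact himg u
  have habs : ∀ u : ℝ, |f' u| • g (f u) = gauss u := by
    intro u
    rw [smul_eq_mul, abs_of_pos (by positivity : (0:ℝ) < f' u), mul_comm]
    exact hkey u
  have hint : IntegrableOn (fun u => |f' u| • g (f u)) (Ici a) := by
    apply Integrable.integrableOn
    exact gauss_integrable.congr (Filter.Eventually.of_forall fun u => (habs u).symm)
  have hint2 : IntegrableOn (fun u => (g ∘ f) u * f' u) (Ici a) := by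
    apply Integrable.integrableOn
    exact gauss_integrable.congr (Filter.Eventually.of_forall fun u => (hkey u).symm)
  have hg1 : IntegrableOn g (f '' Ici a) := by
    rw [integrableOn_image_iff_integrableOn_abs_deriv_smul measurableSet_Ici
      (fun u _ => (hderiv u).hasDerivWithinAt) (hmono.injective.injOn) g]
    exact hint
  have htop : Tendsto f atTop atTop := by
    apply tendsto_exp_atTop.comp
    apply Filter.tendsto_atTop_add_const_right
    exact Tendsto.const_mul_atTop (sqrt_pos.2 hs) tendsto_id
  have := integral_comp_mul_deriv_Ioi (f := f) (f' := f') (g := g) (a := a)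
    (Continuous.continuousOn (by fun_prop)) htop
    (fun u _ => (hderiv u).hasDerivWithinAt) hcont hg1 hint2
  rw [hfa] at this
  rw [← this]
  apply setIntegral_congr_fun measurableSet_Ioi
  intro u _
  exact hkey u

lemma keyB (hs : 0 < s) (hx : 0 < x) :
    ∫ z in Ioi x, z * (exp (-(log z + s) ^ 2 / (2 * s)) / (z * sqrt (2 * π * s)))
      = exp (-s / 2) * ∫ u in Ioi (log x / sqrt s), gauss u := by
  have hss : sqrt s ≠ 0 := by positivity
  have hs2 : sqrt s * sqrt s = s := mul_self_sqrt hs.le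
  set a : ℝ := log x / sqrt s with ha
  set f : ℝ → ℝ := fun u => exp (sqrt s * u) with hf
  set f' : ℝ → ℝ := fun u => exp (sqrt s * u) * sqrt s with hf'
  set g : ℝ → ℝ := fun z => z * (exp (-(log z + s) ^ 2 / (2 * s)) / (z * sqrt (2 * π * s))) with hg
  have hfa : f a = x := by
    simp only [hf, ha]
    rw [mul_div_cancel₀ _ hss, exp_log hx]
  have hderiv : ∀ u : ℝ, HasDerivAt f (f' u) u := by
    intro u
    have h1 : HasDerivAt (fun u : ℝ => sqrt s * u) (sqrt s) u := by
      simpa using (hasDerivAt_id u).const_mul (sqrt s)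
    simpa [hf, hf'] using h1.exp
  have hmono : StrictMono f := by
    intro u v huv
    apply exp_lt_exp.2
    have : 0 < sqrt s := sqrt_pos.2 hs
    nlinarith
  have hkey : ∀ u : ℝ, g (f u) * f' u = exp (-s / 2) * gauss u := by
    intro u
    have hfpos : 0 < f u := exp_pos _
    simp only [hg, hf, hf', gauss, log_exp]
    have h1 : sqrt s * u + -(sqrt s * u + s) ^ 2 / (2 * s) = -s / 2 + -u ^ 2 / 2 := by
      field_simp; nlinarith
    rw [sqrt_mul (by positivity : (0:ℝ) ≤ 2 * π)]
    have h2 : sqrt (2 * π) ≠ 0 := by positivity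
    have h3 : exp (sqrt s * u) ≠ 0 := exp_ne_zero _
    field_simp
    simp only [← exp_add, exp_eq_exp]; linear_combination h1
  have himg : ∀ u : ℝ, 0 < f u := fun u => exp_pos _
  have hcont : ContinuousOn g (f '' Ioi a) := by
    apply ContinuousOn.mono (s := {z : ℝ | 0 < z})
    · apply ContinuousOn.mul continuousOn_id
      apply ContinuousOn.div
      · apply ContinuousOn.rexp
        apply ContinuousOn.div_const
        apply ContinuousOn.neg
        apply ContinuousOn.pow
        refine ContinuousOn.add (Real.continuousOn_log.mono ?_) continuousOn_const
        intro z hz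
        simpa using ne_of_gt (show (0:ℝ) < z from hz)
      · exact ContinuousOn.mul continuousOn_id continuousOn_const
      · intro z hz
        have : (0:ℝ) < z := hz
        positivity
    · rintro _ ⟨u, _, rfl⟩; exact himg u
  have habs : ∀ u : ℝ, |f' u| • g (f u) = exp (-s / 2) * gauss u := by
    intro u
    rw [smul_eq_mul, abs_of_pos (by positivity : (0:ℝ) < f' u), mul_comm]
    exact hkey u
  have hint : IntegrableOn (fun u => |f' u| • g (f u)) (Ici a) := by
    apply Integrable.integrableOn
    exact ((gauss_integrable.const_mul (exp (-s / 2))).congr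
      (Filter.Eventually.of_forall fun u => (habs u).symm))
  have hint2 : IntegrableOn (fun u => (g ∘ f) u * f' u) (Ici a) := by
    apply Integrable.integrableOn
    exact ((gauss_integrable.const_mul (exp (-s / 2))).congr
      (Filter.Eventually.of_forall fun u => (hkey u).symm))
  have hg1 : IntegrableOn g (f '' Ici a) := by
    rw [integrableOn_image_iff_integrableOn_abs_deriv_smul measurableSet_Ici
      (fun u _ => (hderiv u).hasDerivWithinAt) (hmono.injective.injOn) g]
    exact hint
  have htop : Tendsto f atTop atTop := by
    apply tendsto_exp_atTop.comp
    exact Tendsto.const_mul_atTop (sqrt_pos.2 hs) tendsto_id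
  have heq := integral_comp_mul_deriv_Ioi (f := f) (f' := f') (g := g) (a := a)
    (Continuous.continuousOn (by fun_prop)) htop
    (fun u _ => (hderiv u).hasDerivWithinAt) hcont hg1 hint2
  rw [hfa] at heq
  rw [← heq, ← integral_const_mul]
  apply setIntegral_congr_fun measurableSet_Ioi
  intro u _
  exact hkey u

end Subst

lemma normCdf_eq_gauss (c : ℝ) : normCdf c = ∫ u in Iic c, gauss u := rfl

lemma shift_eq {s L : ℝ} (hs : 0 < s) : (L + s) / sqrt s - sqrt s = L / sqrt s := by
  have hss : sqrt s ≠ 0 := by positivity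
  have hs2 : sqrt s * sqrt s = s := mul_self_sqrt hs.le
  field_simp
  rw [sq, hs2]; ring

/-- Geometric Brownian motion marginals: the mass- and mean-preservation
conditions for the phase-transition points `(x₁, y₁)` imply
`(ln x₁ + t)/√t = (ln y₁ + t + ε)/√(t+ε)` and the algebraic equation
`1 − Φ(ln x₁/√t) = e^{−ε/2}(1 − Φ((ln x₁ + t)/√t − √(t+ε)))`. -/
theorem stmt13 (t ε x₁ y₁ : ℝ) (ht : 0 < t) (hε : 0 < ε)
    (hx₁ : 0 < x₁) (hy₁ : 0 < y₁)
    (hmass : ∫ z in Ioi x₁, exp (-(log z + t) ^ 2 / (2 * t)) / (z * sqrt (2 * π * t))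
      = ∫ z in Ioi y₁,
          exp (-(log z + (t + ε)) ^ 2 / (2 * (t + ε))) / (z * sqrt (2 * π * (t + ε))))
    (hmean : ∫ z in Ioi x₁, z * (exp (-(log z + t) ^ 2 / (2 * t)) / (z * sqrt (2 * π * t)))
      = ∫ z in Ioi y₁,
          z * (exp (-(log z + (t + ε)) ^ 2 / (2 * (t + ε))) / (z * sqrt (2 * π * (t + ε))))) :
    (log x₁ + t) / sqrt t = (log y₁ + t + ε) / sqrt (t + ε)
    ∧ 1 - normCdf (log x₁ / sqrt t)
      = exp (-ε / 2) * (1 - normCdf ((log x₁ + t) / sqrt t - sqrt (t + ε))) := by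
  have htε : 0 < t + ε := by linarith
  rw [keyA ht hx₁, keyA htε hy₁] at hmass
  rw [keyB ht hx₁, keyB htε hy₁] at hmean
  rw [gauss_Ioi, gauss_Ioi, ← normCdf_eq_gauss, ← normCdf_eq_gauss] at hmass
  have hab : (log x₁ + t) / sqrt t = (log y₁ + (t + ε)) / sqrt (t + ε) :=
    normCdf_strictMono.injective (by linarith)
  constructor
  · rw [hab, add_assoc]
  · rw [gauss_Ioi, gauss_Ioi, ← normCdf_eq_gauss, ← normCdf_eq_gauss] at hmean
    have h1 : (log x₁ + t) / sqrt t - sqrt (t + ε)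
        = log y₁ / sqrt (t + ε) := by
      rw [hab, shift_eq htε]
    rw [h1]
    have h2 : exp (-(t + ε) / 2) = exp (-ε / 2) * exp (-t / 2) := by
      rw [← exp_add]; ring_nf
    rw [h2] at hmean
    have h3 : exp (-t / 2) ≠ 0 := exp_ne_zero _
    have h4 : exp (-t / 2) * (1 - normCdf (log x₁ / sqrt t))
        = exp (-t / 2) * (exp (-ε / 2) * (1 - normCdf (log y₁ / sqrt (t + ε)))) := by
      rw [hmean]; ring
    exact mul_left_cancel₀ h3 h4
end
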